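/- arXiv:0910.4933 — 7 statements merged into one kernel-verified Lean document; each statement's English description precedes it below -/
import Mathlib

section
/- Let k ∈ ℝ and let c : ℝ → ℝ be a C² function with c(s) > 0 for all s ∈ ℝ and c″(s)·c(s) − c′(s)² = k for all s ∈ ℝ. Then k ≥ 0. -/
/-!
Since `c > 0`, the quantity `((c')² + k) / c²` has derivative
`2c'(c''c - (c')² - k) / c³ = 0`, so `(c')² + k = r c²` for a constant `r`, and then
`c'' = r c`. If `r < 0`, then `c'' < 0` and `c` is strictly concave; if `r ≥ 0` and `k < 0`,
then `(c')² ≥ -k > 0`, so by Darboux `c'` has constant sign and stays away from `0`. Either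
way `c` eventually decreases at least linearly in one direction and cannot stay positive.
-/

lemma exists_nonpos_of_deriv_le_neg {f : ℝ → ℝ} (hf : Differentiable ℝ f) {t m : ℝ}
    (hm : m < 0) (h : ∀ s, t ≤ s → deriv f s ≤ m) : ∃ s, f s ≤ 0 := by
  have hx : 0 ≤ |f t| / -m := div_nonneg (abs_nonneg _) (by linarith)
  refine ⟨t + |f t| / -m, ?_⟩
  have hdrop := (convex_Ici t).image_sub_le_mul_sub_of_deriv_le hf.continuous.continuousOn
    hf.differentiableOn (fun s hs => h s (interior_subset hs)) t Set.self_mem_Ici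
    (t + |f t| / -m) (by simpa using hx) (by linarith)
  have hslope : m * (t + |f t| / -m - t) = -|f t| := by
    field_simp [hm.ne]
    ring
  linarith [le_abs_self (f t)]

lemma exists_nonpos_of_pos_le_deriv {f : ℝ → ℝ} (hf : Differentiable ℝ f) {t m : ℝ}
    (hm : 0 < m) (h : ∀ s, s ≤ t → m ≤ deriv f s) : ∃ s, f s ≤ 0 := by
  have hx : 0 ≤ |f t| / m := div_nonneg (abs_nonneg _) hm.le
  refine ⟨t - |f t| / m, ?_⟩
  have hrise := (convex_Iic t).mul_sub_le_image_sub_of_le_deriv hf.continuous.continuousOn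
    hf.differentiableOn (fun s hs => h s (interior_subset (s := Set.Iic t) hs)) (t - |f t| / m)
    (by simpa using hx) t Set.self_mem_Iic (by linarith)
  have hslope : m * (t - (t - |f t| / m)) = |f t| := by
    field_simp [hm.ne']
    ring
  linarith [le_abs_self (f t)]

lemma exists_nonpos_of_strictAnti_deriv {f : ℝ → ℝ} (hf : Differentiable ℝ f)
    (hanti : StrictAnti (deriv f)) : ∃ s, f s ≤ 0 := by
  rcases lt_or_ge (deriv f 1) 0 with h1 | h1
  · exact exists_nonpos_of_deriv_le_neg hf h1 fun s hs => hanti.antitone hs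
  · exact exists_nonpos_of_pos_le_deriv hf (h1.trans_lt (hanti zero_lt_one))
      fun s hs => hanti.antitone hs

lemma exists_nonpos_of_le_sq_deriv {f : ℝ → ℝ} (hf : Differentiable ℝ f) {δ : ℝ}
    (hδ : 0 < δ) (h : ∀ s, δ ≤ deriv f s ^ 2) : ∃ s, f s ≤ 0 := by
  have habs : ∀ s, √δ ≤ |deriv f s| := fun s => by
    simpa only [Real.sqrt_sq_eq_abs] using Real.sqrt_le_sqrt (h s)
  have hsqrt : 0 < √δ := Real.sqrt_pos.mpr hδ
  have hne : ∀ s ∈ Set.univ, deriv f s ≠ 0 := fun s _ hs => by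
    have := habs s
    rw [hs, abs_zero] at this
    linarith
  rcases hasDerivWithinAt_forall_lt_or_forall_gt_of_forall_ne convex_univ
      (fun s _ => (hf s).hasDerivAt.hasDerivWithinAt) hne with hneg | hpos
  · refine exists_nonpos_of_deriv_le_neg hf (neg_lt_zero.mpr hsqrt) (t := 0) fun s _ => ?_
    have := habs s
    rw [abs_of_neg (hneg s trivial)] at this
    linarith
  · refine exists_nonpos_of_pos_le_deriv hf hsqrt (t := 0) fun s _ => ?_
    simpa [abs_of_pos (hpos s trivial)] using habs s

lemma exists_sq_deriv_add_eq_mul_sq {c : ℝ → ℝ} (hd : Differentiable ℝ c)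
    (hd2 : Differentiable ℝ (deriv c)) (hne : ∀ s, c s ≠ 0) {k : ℝ}
    (hode : ∀ s, deriv (deriv c) s * c s - deriv c s ^ 2 = k) :
    ∃ r, ∀ s, deriv c s ^ 2 + k = r * c s ^ 2 := by
  set φ : ℝ → ℝ := fun s => (deriv c s ^ 2 + k) / c s ^ 2
  have hφ : ∀ s, HasDerivAt φ 0 s := fun s => by
    have hnum := ((hd2 s).hasDerivAt.fun_pow 2).add_const k
    have hden := (hd s).hasDerivAt.fun_pow 2
    refine (hnum.div hden (pow_ne_zero 2 (hne s))).congr_deriv ?_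
    rw [div_eq_zero_iff]
    left
    push_cast
    linear_combination (2 * deriv c s * c s) * hode s
  refine ⟨φ 0, fun s => ?_⟩
  have hconst : φ s = φ 0 := is_const_of_deriv_eq_zero
    (fun x => (hφ x).differentiableAt) (fun x => (hφ x).deriv) s 0
  rw [← hconst, div_mul_cancel₀ _ (pow_ne_zero 2 (hne s))]

/-- If a positive `C²` function `c` on `ℝ` satisfies `c″c − (c′)² = k`,
then `k ≥ 0`. -/
theorem stmt_3 (k : ℝ) (c : ℝ → ℝ)
    (hc : ContDiff ℝ 2 c)
    (hpos : ∀ s : ℝ, 0 < c s)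
    (hode : ∀ s : ℝ, deriv (deriv c) s * c s - (deriv c s) ^ 2 = k) :
    0 ≤ k := by
  by_contra! hk
  have hd : Differentiable ℝ c := hc.differentiable (by norm_num)
  have hd2 : Differentiable ℝ (deriv c) :=
    (hc.iterate_deriv' 1 1).differentiable (by norm_num)
  obtain ⟨r, hr⟩ := exists_sq_deriv_add_eq_mul_sq hd hd2 (fun s => (hpos s).ne') hode
  obtain ⟨s, hs⟩ : ∃ s, c s ≤ 0 := by
    rcases lt_or_ge r 0 with hr_neg | hr_nonneg
    · refine exists_nonpos_of_strictAnti_deriv hd (strictAnti_of_deriv_neg fun s => ?_)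
      have hcc : deriv (deriv c) s * c s = r * c s * c s := by
        linear_combination hode s + hr s
      rw [mul_right_cancel₀ (hpos s).ne' hcc]
      exact mul_neg_of_neg_of_pos hr_neg (hpos s)
    · exact exists_nonpos_of_le_sq_deriv hd (neg_pos.mpr hk) fun s => by
        nlinarith [hr s, mul_nonneg hr_nonneg (sq_nonneg (c s))]
  exact (hpos s).not_ge hs
end

section
/- Let k > 0 and let c : ℝ → ℝ be a C² function with c(s) > 0 for all s ∈ ℝ and c″(s)·c(s) − c′(s)² = k for all s ∈ ℝ. Then there exist r > 0 and b ∈ ℝ such that c(s) = (√k / r)·cosh(rs + b) for all s ∈ ℝ. -/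
/-!
Differentiating shows that `(c'² + k) / c²` is constant, equal to some `r² > 0`. Combined
with the equation this gives the linear equation `c'' = r² c`, whose solutions are
`α e^{rs} + β e^{-rs}`. The constant of motion forces `αβ = k / (4r²) > 0`, and
`α + β = c 0 > 0`, so `α, β > 0` and `c s = 2√(αβ) cosh (rs + b)` with `e^b = √(α / β)`.
-/

open Real

theorem eq_mul_exp_of_hasDerivAt {f : ℝ → ℝ} {a : ℝ} (hf : ∀ x, HasDerivAt f (a * f x) x)
    (x : ℝ) : f x = f 0 * exp (a * x) := by
  have hderiv : ∀ y, HasDerivAt (fun y => f y * exp (-a * y)) 0 y := fun y =>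
    ((hf y).mul ((hasDerivAt_id' y).const_mul (-a)).exp).congr_deriv (by ring)
  have hconst := is_const_of_deriv_eq_zero (fun y => (hderiv y).differentiableAt)
    (fun y => (hderiv y).deriv) x 0
  simp only [mul_zero, exp_zero, mul_one, neg_mul, exp_neg] at hconst
  field_simp at hconst
  linarith

theorem div_sq_eq_of_deriv_deriv_mul_sub_sq {c : ℝ → ℝ} {k : ℝ} (hc : Differentiable ℝ c)
    (hc' : Differentiable ℝ (deriv c)) (hne : ∀ s, c s ≠ 0)
    (hode : ∀ s, deriv (deriv c) s * c s - deriv c s ^ 2 = k) (s : ℝ) :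
    (deriv c s ^ 2 + k) / c s ^ 2 = (deriv c 0 ^ 2 + k) / c 0 ^ 2 := by
  have hderiv : ∀ s, HasDerivAt (fun s => (deriv c s ^ 2 + k) / c s ^ 2) 0 s := fun s =>
    ((((hc' s).hasDerivAt.pow 2).add_const k).div ((hc s).hasDerivAt.pow 2)
      (pow_ne_zero 2 (hne s))).congr_deriv <| by
        rw [div_eq_zero_iff, Pi.pow_apply, Pi.pow_apply]
        left
        linear_combination (2 * deriv c s * c s) * hode s
  exact is_const_of_deriv_eq_zero (fun y => (hderiv y).differentiableAt)
    (fun y => (hderiv y).deriv) s 0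

theorem eq_exp_add_exp_neg_of_deriv_deriv_eq {f : ℝ → ℝ} {r : ℝ} (hr : r ≠ 0)
    (hf : Differentiable ℝ f) (hf' : Differentiable ℝ (deriv f))
    (hode : ∀ s, deriv (deriv f) s = r ^ 2 * f s) (s : ℝ) :
    f s = (deriv f 0 + r * f 0) / (2 * r) * exp (r * s)
      + (r * f 0 - deriv f 0) / (2 * r) * exp (-(r * s)) := by
  -- `f' ± r f` solves the first-order equation `v' = ± r v`.
  have hplus := eq_mul_exp_of_hasDerivAt (f := fun s => deriv f s + r * f s) (a := r)
    (fun s => ((hf' s).hasDerivAt.add ((hf s).hasDerivAt.const_mul r)).congr_deriv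
      (by rw [hode]; ring)) s
  have hminus := eq_mul_exp_of_hasDerivAt (f := fun s => deriv f s - r * f s) (a := -r)
    (fun s => ((hf' s).hasDerivAt.sub ((hf s).hasDerivAt.const_mul r)).congr_deriv
      (by rw [hode]; ring)) s
  rw [neg_mul] at hminus
  field_simp
  linear_combination hplus - hminus

theorem mul_exp_add_mul_exp_neg_eq_cosh {α β : ℝ} (hα : 0 < α) (hβ : 0 < β) (x : ℝ) :
    α * exp x + β * exp (-x) = 2 * √(α * β) * cosh (x + log (√α / √β)) := by
  have hα' := sqrt_pos.2 hα
  have hβ' := sqrt_pos.2 hβ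
  rw [cosh_eq, neg_add, exp_add, exp_add, exp_neg (log _), exp_log (by positivity),
    sqrt_mul hα.le]
  field_simp
  rw [sq_sqrt hα.le, sq_sqrt hβ.le]
  ring

/-- The `k > 0` case: a positive `C²` solution of `c″c − (c′)² = k` on `ℝ` is
`c(s) = (√k / r) cosh(rs + b)` for some `r > 0` and `b ∈ ℝ`. -/
theorem stmt_5 (k : ℝ) (hk : 0 < k) (c : ℝ → ℝ)
    (hc : ContDiff ℝ 2 c)
    (hpos : ∀ s : ℝ, 0 < c s)
    (hode : ∀ s : ℝ, deriv (deriv c) s * c s - (deriv c s) ^ 2 = k) :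
    ∃ r : ℝ, 0 < r ∧ ∃ b : ℝ,
      ∀ s : ℝ, c s = (Real.sqrt k / r) * Real.cosh (r * s + b) := by
  have hc1 := hc.differentiable two_ne_zero
  have hc2 := hc.differentiable_deriv_two
  have hne (s : ℝ) : c s ≠ 0 := (hpos s).ne'
  set r := √((deriv c 0 ^ 2 + k) / c 0 ^ 2)
  have hr : 0 < r := sqrt_pos.2 (by have := hpos 0; positivity)
  have hr2 : r ^ 2 = (deriv c 0 ^ 2 + k) / c 0 ^ 2 := sq_sqrt (by positivity)
  have henergy (s : ℝ) : deriv c s ^ 2 + k = r ^ 2 * c s ^ 2 := by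
    rw [hr2, ← div_sq_eq_of_deriv_deriv_mul_sub_sq hc1 hc2 hne hode s]
    field_simp [hne s]
  have hlin (s : ℝ) : deriv (deriv c) s = r ^ 2 * c s :=
    mul_right_cancel₀ (hne s) (by linear_combination hode s + henergy s)
  set α := (deriv c 0 + r * c 0) / (2 * r)
  set β := (r * c 0 - deriv c 0) / (2 * r)
  have hαβ : α * β = (√k / (2 * r)) ^ 2 := by
    rw [div_pow, sq_sqrt hk.le]
    simp only [α, β]
    field_simp
    linear_combination -henergy 0
  obtain ⟨hα, hβ⟩ : 0 < α ∧ 0 < β := by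
    have hsum : α + β = c 0 := by simp only [α, β]; field_simp; ring
    rcases pos_and_pos_or_neg_and_neg_of_mul_pos (hαβ ▸ by positivity : 0 < α * β) with h | h
    · exact h
    · linarith [hpos 0, h.1, h.2]
  refine ⟨r, hr, log (√α / √β), fun s => ?_⟩
  rw [eq_exp_add_exp_neg_of_deriv_deriv_eq hr.ne' hc1 hc2 hlin s,
    mul_exp_add_mul_exp_neg_eq_cosh hα hβ, hαβ, sqrt_sq (by positivity)]
  ring
end

section
/- Let ε ∈ {−1, 1}, let c : ℝ → ℝ be C² with c(s) > 0 for all s, let h : ℝ → ℝ be C² with h(t₀) ≠ 0 for some t₀ ∈ ℝ, and let a : ℝ² → ℝ be a C² function satisfying, for all (s, t) ∈ ℝ²: ∂a/∂s (s,t) = −ε·h′(t)/c(s)² and ∂a/∂t (s,t) = −h(t)·c′(s)/c(s). Then there exists a constant k ∈ ℝ such that c″(s)·c(s) − c′(s)² = k for all s ∈ ℝ and h″(t) = ε·k·h(t) for all t ∈ ℝ. -/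
/-!
Commuting the mixed partials of `a` gives `ε h″(t) / c(s)² = h(t) (c″c − c′²)(s) / c(s)²`,
so `ε h″(t) = h(t) K(s)` with `K = c″c − c′²`. Evaluating at `t₀`, where `h(t₀) ≠ 0`, shows that
`K` is a constant `k`, and then `ε² = 1` gives `h″ = ε k h`.
-/

section PartialDerivatives

variable {F : Type*} [NormedAddCommGroup F] [NormedSpace ℝ F]

theorem HasFDerivAt.hasDerivAt_partial_fst {g : ℝ × ℝ → F} {g' : ℝ × ℝ →L[ℝ] F} {s t : ℝ}
    (hg : HasFDerivAt g g' (s, t)) : HasDerivAt (fun s' => g (s', t)) (g' (1, 0)) s :=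
  hg.comp_hasDerivAt s ((hasDerivAt_id s).prodMk (hasDerivAt_const s t))

theorem HasFDerivAt.hasDerivAt_partial_snd {g : ℝ × ℝ → F} {g' : ℝ × ℝ →L[ℝ] F} {s t : ℝ}
    (hg : HasFDerivAt g g' (s, t)) : HasDerivAt (fun t' => g (s, t')) (g' (0, 1)) t :=
  hg.comp_hasDerivAt t ((hasDerivAt_const t s).prodMk (hasDerivAt_id t))

theorem deriv_partial_comm {f : ℝ → ℝ → F} (hf : ContDiff ℝ 2 (fun p : ℝ × ℝ => f p.1 p.2))
    (s t : ℝ) :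
    deriv (fun t' => deriv (fun s' => f s' t') s) t =
      deriv (fun s' => deriv (fun t' => f s' t') t) s := by
  set g : ℝ × ℝ → F := fun p => f p.1 p.2
  have hg : ∀ p, HasFDerivAt g (fderiv ℝ g p) p :=
    fun p => (hf.differentiable two_ne_zero p).hasFDerivAt
  have hg' : HasFDerivAt (fderiv ℝ g) (fderiv ℝ (fderiv ℝ g) (s, t)) (s, t) :=
    ((hf.fderiv_right le_rfl).differentiable one_ne_zero _).hasFDerivAt
  have hfst : (fun t' => deriv (fun s' => f s' t') s) = fun t' => fderiv ℝ g (s, t') (1, 0) :=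
    funext fun t' => (hg (s, t')).hasDerivAt_partial_fst.deriv
  have hsnd : (fun s' => deriv (fun t' => f s' t') t) = fun s' => fderiv ℝ g (s', t) (0, 1) :=
    funext fun s' => (hg (s', t)).hasDerivAt_partial_snd.deriv
  rw [hfst, hsnd, (hg'.hasDerivAt_partial_snd.clm_apply (hasDerivAt_const t _)).deriv,
    (hg'.hasDerivAt_partial_fst.clm_apply (hasDerivAt_const s _)).deriv]
  simpa using (hf.contDiffAt.isSymmSndFDerivAt (by simp)).eq (0, 1) (1, 0)

end PartialDerivatives

theorem exists_const_of_mul_eq_mul {ε : ℝ} (hε : ε * ε = 1) {K u v : ℝ → ℝ} {t₀ : ℝ}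
    (ht₀ : u t₀ ≠ 0) (hsep : ∀ s t, ε * v t = u t * K s) :
    ∃ k : ℝ, (∀ s, K s = k) ∧ ∀ t, v t = ε * k * u t := by
  have hK : ∀ s, K s = ε * v t₀ / u t₀ := fun s => by
    rw [eq_div_iff ht₀, hsep s t₀, mul_comm]
  refine ⟨ε * v t₀ / u t₀, hK, fun t => ?_⟩
  rw [← hK 0]
  linear_combination ε * hsep 0 t - v t * hε

/-- Separation of variables from the Killing equations on the static surface
`ℝ ×_{εc} ℝ`: equality of mixed partials of `a` forces
`c″c − (c′)² = k` and `h″ = εkh` for a single constant `k`. -/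
theorem stmt_6 (ε : ℝ) (hε : ε = -1 ∨ ε = 1)
    (c : ℝ → ℝ) (hc : ContDiff ℝ 2 c) (hcpos : ∀ s : ℝ, 0 < c s)
    (h : ℝ → ℝ) (hh : ContDiff ℝ 2 h) (t₀ : ℝ) (ht₀ : h t₀ ≠ 0)
    (a : ℝ → ℝ → ℝ) (ha : ContDiff ℝ 2 (fun p : ℝ × ℝ => a p.1 p.2))
    (has : ∀ s t : ℝ, deriv (fun s' => a s' t) s = -ε * deriv h t / (c s) ^ 2)
    (hat : ∀ s t : ℝ, deriv (fun t' => a s t') t = -h t * deriv c s / c s) :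
    ∃ k : ℝ, (∀ s : ℝ, deriv (deriv c) s * c s - (deriv c s) ^ 2 = k) ∧
      (∀ t : ℝ, deriv (deriv h) t = ε * k * h t) := by
  have hε2 : ε * ε = 1 := by rcases hε with rfl | rfl <;> norm_num
  refine exists_const_of_mul_eq_mul hε2 ht₀ fun s t => ?_
  have hcs : c s ≠ 0 := (hcpos s).ne'
  have hdt : HasDerivAt (fun t' => -ε * deriv h t' / c s ^ 2)
      (-ε * deriv (deriv h) t / c s ^ 2) t :=
    (((hh.iterate_deriv' 1 1).differentiable one_ne_zero t).hasDerivAt.const_mul _).div_const _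
  have hds : HasDerivAt (fun s' => -h t * deriv c s' / c s')
      ((-h t * deriv (deriv c) s * c s - -h t * deriv c s * deriv c s) / c s ^ 2) s :=
    (((hc.iterate_deriv' 1 1).differentiable one_ne_zero s).hasDerivAt.const_mul _).div
      ((hc.differentiable two_ne_zero s).hasDerivAt) hcs
  have hmix := deriv_partial_comm ha s t
  simp only [has, hat, hdt.deriv, hds.deriv] at hmix
  field_simp at hmix
  linear_combination -hmix
end

section
/- Let ε ∈ {−1, 1}, r > 0, let h : ℝ → ℝ be C², and let a : ℝ² → ℝ be a C² function satisfying, for all (s,t) ∈ ℝ²: ∂a/∂s (s,t) = −ε·h′(t)/cosh²(rs) and ∂a/∂t (s,t) = −r·h(t)·tanh(rs). Then h″(t) = ε·r²·h(t) for all t ∈ ℝ, and there exists γ ∈ ℝ such that a(s,t) = −(ε/r)·h′(t)·tanh(rs) + γ for all (s,t) ∈ ℝ². -/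
/-!
Integrating `∂a/∂s = -ε h'(t) / cosh²(rs)` in `s` gives
`a(s,t) = -(ε/r) h'(t) tanh(rs) + a(0,t)`, and since `tanh 0 = 0` the second equation says that
`a(0,·)` is constant. Differentiating this representation in `t` at a point `s ≠ 0` and comparing
with `∂a/∂t = -r h(t) tanh(rs)` gives `ε h'' = r² h`, i.e. `h'' = ε r² h` because `ε² = 1`.
-/

open Real

namespace Real

theorem hasDerivAt_tanh (x : ℝ) : HasDerivAt tanh (1 / cosh x ^ 2) x := by
  have h := (hasDerivAt_sinh x).div (hasDerivAt_cosh x) (cosh_pos x).ne'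
  rwa [← sq, ← sq, cosh_sq_sub_sinh_sq,
    show sinh / cosh = tanh from funext fun y => (tanh_eq_sinh_div_cosh y).symm] at h

theorem hasDerivAt_tanh_const_mul (r x : ℝ) :
    HasDerivAt (fun s => tanh (r * s)) (r / cosh (r * x) ^ 2) x := by
  have h := (hasDerivAt_tanh (r * x)).comp x ((hasDerivAt_id x).const_mul r)
  rwa [mul_one, one_div_mul_eq_div] at h

theorem tanh_ne_zero {x : ℝ} (hx : x ≠ 0) : tanh x ≠ 0 := by
  intro h
  have := artanh_tanh x
  rw [h, artanh_zero] at this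
  exact hx this.symm

end Real

theorem eq_div_mul_tanh_add_of_deriv_eq {g : ℝ → ℝ} {c r : ℝ} (hr : r ≠ 0)
    (hg : Differentiable ℝ g) (hg' : ∀ s, deriv g s = c / cosh (r * s) ^ 2) (s : ℝ) :
    g s = c / r * tanh (r * s) + g 0 := by
  have hF (x : ℝ) : HasDerivAt (fun s => g s - c / r * tanh (r * s)) 0 x := by
    have hcancel : deriv g x - c / r * (r / cosh (r * x) ^ 2) = 0 := by
      rw [hg', div_mul_div_cancel₀ hr, sub_self]
    rw [← hcancel]
    exact (hg x).hasDerivAt.sub ((hasDerivAt_tanh_const_mul r x).const_mul (c / r))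
  have := is_const_of_deriv_eq_zero (fun x => (hF x).differentiableAt) (fun x => (hF x).deriv) s 0
  rw [mul_zero, tanh_zero, mul_zero, sub_zero] at this
  linarith

theorem deriv_deriv_eq_of_eq_mul_tanh {ε r γ : ℝ} (hε : ε * ε = 1) (hr : r ≠ 0)
    {h : ℝ → ℝ} {a : ℝ → ℝ → ℝ}
    (ha : ∀ s t, a s t = -(ε / r) * deriv h t * tanh (r * s) + γ)
    (hat : ∀ s t, deriv (fun t' => a s t') t = -r * h t * tanh (r * s)) (t : ℝ) :
    deriv (deriv h) t = ε * r ^ 2 * h t := by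
  have hderiv : deriv (fun t' => a 1 t') t = -(ε / r) * deriv (deriv h) t * tanh r := by
    simp only [ha, mul_one]
    rw [deriv_add_const, deriv_mul_const_field', deriv_const_mul_field']
  have key : -r * h t = -(ε / r) * deriv (deriv h) t := by
    apply mul_right_cancel₀ (tanh_ne_zero hr)
    rw [← hderiv, hat, mul_one]
  field_simp at key
  linear_combination ε * key - deriv (deriv h) t * hε

theorem stmt_7_general (ε : ℝ) (hε : ε = -1 ∨ ε = 1) (r : ℝ) (hr : 0 < r)
    (h : ℝ → ℝ)
    (a : ℝ → ℝ → ℝ) (ha : ContDiff ℝ 2 (fun p : ℝ × ℝ => a p.1 p.2))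
    (has : ∀ s t : ℝ,
      deriv (fun s' => a s' t) s = -ε * deriv h t / (Real.cosh (r * s)) ^ 2)
    (hat : ∀ s t : ℝ,
      deriv (fun t' => a s t') t = -r * h t * Real.tanh (r * s)) :
    (∀ t : ℝ, deriv (deriv h) t = ε * r ^ 2 * h t) ∧
      ∃ γ : ℝ, ∀ s t : ℝ,
        a s t = -(ε / r) * deriv h t * Real.tanh (r * s) + γ := by
  have hεε : ε * ε = 1 := by rcases hε with rfl | rfl <;> norm_num
  have hdiff : Differentiable ℝ (fun p : ℝ × ℝ => a p.1 p.2) := ha.differentiable (by norm_num)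
  have hdiff_s (t : ℝ) : Differentiable ℝ (fun s => a s t) :=
    hdiff.comp (differentiable_id.prodMk (differentiable_const t))
  have hdiff_t (s : ℝ) : Differentiable ℝ (fun t => a s t) :=
    hdiff.comp ((differentiable_const s).prodMk differentiable_id)
  have ha₀ (t : ℝ) : a 0 t = a 0 0 :=
    is_const_of_deriv_eq_zero (hdiff_t 0) (fun t => by simp [hat]) t 0
  have hrepr (s t : ℝ) : a s t = -(ε / r) * deriv h t * tanh (r * s) + a 0 0 := by
    rw [eq_div_mul_tanh_add_of_deriv_eq hr.ne' (hdiff_s t) (has · t) s, ha₀]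
    ring
  exact ⟨deriv_deriv_eq_of_eq_mul_tanh hεε hr.ne' hrepr hat, a 0 0, hrepr⟩

/-- Hyperbolic case of the classification of standard static vector fields on
`(ℝ², ds² + ε cosh²(rs) dt²)`: the Killing system forces `h″ = εr²h` and
`a(s,t) = −(ε/r) h′(t) tanh(rs) + γ`. -/
theorem stmt_7 (ε : ℝ) (hε : ε = -1 ∨ ε = 1) (r : ℝ) (hr : 0 < r)
    (h : ℝ → ℝ) (hh : ContDiff ℝ 2 h)
    (a : ℝ → ℝ → ℝ) (ha : ContDiff ℝ 2 (fun p : ℝ × ℝ => a p.1 p.2))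
    (has : ∀ s t : ℝ,
      deriv (fun s' => a s' t) s = -ε * deriv h t / (Real.cosh (r * s)) ^ 2)
    (hat : ∀ s t : ℝ,
      deriv (fun t' => a s t') t = -r * h t * Real.tanh (r * s)) :
    (∀ t : ℝ, deriv (deriv h) t = ε * r ^ 2 * h t) ∧
      ∃ γ : ℝ, ∀ s t : ℝ,
        a s t = -(ε / r) * deriv h t * Real.tanh (r * s) + γ :=
  stmt_7_general ε hε r hr h a ha has hat
end

section
/- Let ε ∈ {−1, 1}, r ∈ ℝ with r ≠ 0, let h : ℝ → ℝ be C², and let a : ℝ² → ℝ be a C² function satisfying, for all (s,t) ∈ ℝ²: ∂a/∂s (s,t) = −ε·h′(t)·e^{−2rs} and ∂a/∂t (s,t) = −r·h(t). Then there exist α, β, γ ∈ ℝ such that h(t) = α t + β for all t ∈ ℝ and a(s,t) = (εα/(2r))·e^{−2rs} − (rα/2)·t² − rβ·t + γ for all (s,t) ∈ ℝ². -/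
/-!
Integrating `∂a/∂s` in `s` gives `a(s,t) = a(0,t) + h'(t) φ(s)` with `φ(s) = ε(e^{−2rs} − 1)/(2r)`.
Since `∂a/∂t = −r h(t)` does not depend on `s`, the difference `a(1,t) − a(0,t) = h'(t) φ(1)` is
constant in `t`, and `φ(1) ≠ 0` because `εr ≠ 0`; so `h'` is constant and `h` is affine. Then
`∂a/∂t(0,t)` is affine in `t`, so `a(0,t)` is quadratic.
-/

open Real

section Antiderivative

variable {𝕜 G : Type*} [RCLike 𝕜] [NormedAddCommGroup G] [NormedSpace 𝕜 G]

theorem eq_add_sub_of_hasDerivAt_deriv {f F : 𝕜 → G} (hf : Differentiable 𝕜 f)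
    (hF : ∀ x, HasDerivAt F (deriv f x) x) (x y : 𝕜) : f x = f y + (F x - F y) := by
  have hconst : f x - F x = f y - F y :=
    is_const_of_deriv_eq_zero (hf.sub fun z => (hF z).differentiableAt)
      (fun z => by rw [deriv_sub (hf z) (hF z).differentiableAt, (hF z).deriv, sub_self]) x y
  rw [sub_eq_sub_iff_sub_eq_sub] at hconst
  rw [← hconst]
  abel

end Antiderivative

theorem eq_of_deriv_eq_const_mul_exp {f : ℝ → ℝ} {c k : ℝ} (hk : k ≠ 0)
    (hf : Differentiable ℝ f) (hf' : ∀ x, deriv f x = c * exp (k * x)) (x : ℝ) :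
    f x = f 0 + c / k * (exp (k * x) - 1) := by
  have hF : ∀ x, HasDerivAt (fun x => c / k * exp (k * x)) (deriv f x) x := fun x => by
    refine (((hasDerivAt_id x).const_mul k).exp.const_mul (c / k)).congr_deriv ?_
    rw [hf']
    field_simp
    simp
  rw [eq_add_sub_of_hasDerivAt_deriv hf hF x 0]
  simp only [mul_zero, exp_zero]
  ring

theorem eq_of_deriv_eq_const {f : ℝ → ℝ} {c : ℝ} (hf : Differentiable ℝ f)
    (hf' : ∀ x, deriv f x = c) (x : ℝ) : f x = c * x + f 0 := by
  have hF : ∀ x, HasDerivAt (fun x => c * x) (deriv f x) x := fun x => by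
    simpa [hf'] using (hasDerivAt_id x).const_mul c
  rw [eq_add_sub_of_hasDerivAt_deriv hf hF x 0]
  ring

theorem eq_of_deriv_eq_affine {f : ℝ → ℝ} {p q : ℝ} (hf : Differentiable ℝ f)
    (hf' : ∀ x, deriv f x = p * x + q) (x : ℝ) : f x = p / 2 * x ^ 2 + q * x + f 0 := by
  have hF : ∀ x, HasDerivAt (fun x => p / 2 * x ^ 2 + q * x) (deriv f x) x := fun x => by
    refine (((hasDerivAt_pow 2 x).const_mul (p / 2)).add
      ((hasDerivAt_id x).const_mul q)).congr_deriv ?_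
    rw [hf']
    simp only [Nat.cast_ofNat, Nat.add_one_sub_one, pow_one, mul_one]
    ring
  rw [eq_add_sub_of_hasDerivAt_deriv hf hF x 0]
  ring

theorem Differentiable.of_uncurry_left {a : ℝ → ℝ → ℝ}
    (ha : Differentiable ℝ (fun p : ℝ × ℝ => a p.1 p.2)) (t : ℝ) :
    Differentiable ℝ (fun s => a s t) :=
  ha.comp (differentiable_id.prodMk (differentiable_const t))

theorem Differentiable.of_uncurry_right {a : ℝ → ℝ → ℝ}
    (ha : Differentiable ℝ (fun p : ℝ × ℝ => a p.1 p.2)) (s : ℝ) :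
    Differentiable ℝ (fun t => a s t) :=
  ha.comp ((differentiable_const s).prodMk differentiable_id)

section KillingSystem

variable {ε r : ℝ} {h : ℝ → ℝ} {a : ℝ → ℝ → ℝ}

theorem eq_apply_zero_add_of_deriv_fst_eq (hr : r ≠ 0)
    (ha : Differentiable ℝ (fun p : ℝ × ℝ => a p.1 p.2))
    (has : ∀ s t, deriv (fun s' => a s' t) s = -ε * deriv h t * exp (-2 * r * s)) (s t : ℝ) :
    a s t = a 0 t + deriv h t * (ε / (2 * r) * (exp (-2 * r * s) - 1)) := by
  rw [eq_of_deriv_eq_const_mul_exp (by simpa using hr) (ha.of_uncurry_left t) (has · t) s]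
  field_simp

theorem deriv_eq_deriv_zero_of_deriv_fst_eq_of_deriv_snd_eq (hε : ε ≠ 0) (hr : r ≠ 0)
    (ha : Differentiable ℝ (fun p : ℝ × ℝ => a p.1 p.2))
    (has : ∀ s t, deriv (fun s' => a s' t) s = -ε * deriv h t * exp (-2 * r * s))
    (hat : ∀ s t, deriv (fun t' => a s t') t = -r * h t) (t : ℝ) :
    deriv h t = deriv h 0 := by
  have hdiff_const : a 1 t - a 0 t = a 1 0 - a 0 0 :=
    is_const_of_deriv_eq_zero ((ha.of_uncurry_right 1).sub (ha.of_uncurry_right 0))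
      (fun u => by
        rw [deriv_sub (ha.of_uncurry_right 1 u) (ha.of_uncurry_right 0 u), hat, hat, sub_self])
      t 0
  have hexp : exp (-2 * r * 1) - 1 ≠ 0 := by simpa [sub_eq_zero, exp_eq_one_iff] using hr
  rw [eq_apply_zero_add_of_deriv_fst_eq hr ha has 1 t,
    eq_apply_zero_add_of_deriv_fst_eq hr ha has 1 0] at hdiff_const
  have hφ1 : ε / (2 * r) * (exp (-2 * r * 1) - 1) ≠ 0 :=
    mul_ne_zero (div_ne_zero hε (by positivity)) hexp
  exact mul_right_cancel₀ hφ1 (by linarith)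

end KillingSystem

/-- Exponential case of the classification of standard static vector fields on
`(ℝ², ds² + ε e^{2rs} dt²)`: the Killing system forces `h(t) = αt + β` and
`a(s,t) = (εα/(2r)) e^{−2rs} − (rα/2) t² − rβ t + γ`. -/
theorem stmt_8 (ε : ℝ) (hε : ε = -1 ∨ ε = 1) (r : ℝ) (hr : r ≠ 0)
    (h : ℝ → ℝ) (hh : ContDiff ℝ 2 h)
    (a : ℝ → ℝ → ℝ) (ha : ContDiff ℝ 2 (fun p : ℝ × ℝ => a p.1 p.2))
    (has : ∀ s t : ℝ,
      deriv (fun s' => a s' t) s = -ε * deriv h t * Real.exp (-2 * r * s))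
    (hat : ∀ s t : ℝ, deriv (fun t' => a s t') t = -r * h t) :
    ∃ α β γ : ℝ, (∀ t : ℝ, h t = α * t + β) ∧
      ∀ s t : ℝ, a s t = (ε * α / (2 * r)) * Real.exp (-2 * r * s)
        - (r * α / 2) * t ^ 2 - r * β * t + γ := by
  have hε0 : ε ≠ 0 := by rcases hε with rfl | rfl <;> norm_num
  have hda := ha.differentiable two_ne_zero
  set α := deriv h 0
  set β := h 0
  have hh_affine : ∀ t, h t = α * t + β :=
    eq_of_deriv_eq_const (hh.differentiable two_ne_zero)
      (deriv_eq_deriv_zero_of_deriv_fst_eq_of_deriv_snd_eq hε0 hr hda has hat)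
  have ha_0 : ∀ t, a 0 t = -(r * α) / 2 * t ^ 2 + -(r * β) * t + a 0 0 :=
    eq_of_deriv_eq_affine (hda.of_uncurry_right 0) (fun t => by rw [hat, hh_affine]; ring)
  refine ⟨α, β, a 0 0 - ε * α / (2 * r), hh_affine, fun s t => ?_⟩
  rw [eq_apply_zero_add_of_deriv_fst_eq hr hda has, ha_0,
    deriv_eq_deriv_zero_of_deriv_fst_eq_of_deriv_snd_eq hε0 hr hda has hat]
  field_simp
  ring
end

section
/- Let a ≥ 0 and b ∈ ℝ. There is no C² function λ : ℝ → ℝ with λ(u) > 0 and λ′(u) ≠ 0 for all u ∈ ℝ that satisfies λ′(u)² = −a − b/λ(u) for all u ∈ ℝ. -/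
/-!
Differentiating `(λ′)² = −a − b/λ` and cancelling `λ′ ≠ 0` gives `λ″ = b/(2λ²)`, and `b < 0`
because `0 < (λ′)² = −a − b/λ` with `a ≥ 0`. So `λ` is concave; a concave function lies below
its tangent lines, and a non-horizontal tangent line takes negative values, contradicting `λ > 0`.
-/

open Set Topology

namespace ConcaveOn

variable {f : ℝ → ℝ} {x : ℝ}

theorem le_add_deriv_mul (hf : ConcaveOn ℝ univ f) (hd : DifferentiableAt ℝ f x) (y : ℝ) :
    f y ≤ f x + deriv f x * (y - x) := by
  rcases lt_trichotomy y x with hyx | rfl | hxy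
  · have := hf.deriv_le_slope (mem_univ y) (mem_univ x) hyx hd
    rw [slope_def_field, le_div_iff₀ (sub_pos.2 hyx)] at this
    linarith
  · simp
  · have := hf.slope_le_deriv (mem_univ x) (mem_univ y) hxy hd
    rw [slope_def_field, div_le_iff₀ (sub_pos.2 hxy)] at this
    linarith

theorem exists_neg_of_deriv_ne_zero (hf : ConcaveOn ℝ univ f) (hd : DifferentiableAt ℝ f x)
    (h : deriv f x ≠ 0) : ∃ y, f y < 0 := by
  refine ⟨x - (f x + 1) / deriv f x, ?_⟩
  have := hf.le_add_deriv_mul hd (x - (f x + 1) / deriv f x)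
  rw [sub_sub_cancel_left, mul_neg, mul_div_cancel₀ _ h] at this
  linarith

end ConcaveOn

theorem deriv_deriv_eq_of_deriv_sq_eq {f : ℝ → ℝ} {a b u : ℝ}
    (hf : DifferentiableAt ℝ f u) (hf' : DifferentiableAt ℝ (deriv f) u)
    (hode : ∀ᶠ v in 𝓝 u, deriv f v ^ 2 = -a - b / f v) (hfu : f u ≠ 0) (hf'u : deriv f u ≠ 0) :
    deriv (deriv f) u = b / (2 * f u ^ 2) := by
  have hlhs : HasDerivAt (fun v => deriv f v ^ 2) (2 * deriv f u * deriv (deriv f) u) u := by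
    simpa using hf'.hasDerivAt.fun_pow 2
  have hrhs : HasDerivAt (fun v => -a - b / f v) (b * deriv f u / f u ^ 2) u := by
    refine (((hasDerivAt_const u b).div hf.hasDerivAt hfu).const_sub (-a)).congr_deriv ?_
    ring
  have key := (hlhs.congr_of_eventuallyEq (hode.mono fun v hv => hv.symm)).unique hrhs
  rw [eq_div_iff (by positivity)] at key ⊢
  apply mul_left_cancel₀ hf'u
  linear_combination key

/-- No positive `C²` function on `ℝ` without critical points can satisfy
`(λ′)² = −a − b/λ` with `a ≥ 0`. -/
theorem stmt_12 (a b : ℝ) (ha : 0 ≤ a) :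
    ¬ ∃ l : ℝ → ℝ, ContDiff ℝ 2 l ∧ (∀ u : ℝ, 0 < l u) ∧
      (∀ u : ℝ, deriv l u ≠ 0) ∧
      (∀ u : ℝ, (deriv l u) ^ 2 = -a - b / l u) := by
  rintro ⟨l, hC, hpos, hne, hsq⟩
  have hl : Differentiable ℝ l := hC.differentiable two_ne_zero
  have hl' : Differentiable ℝ (deriv l) :=
    ((contDiff_succ_iff_deriv (n := 1)).1 hC).2.2.differentiable one_ne_zero
  have hb : b < 0 := by
    have h0 : 0 < deriv l 0 ^ 2 := sq_pos_iff.2 (hne 0)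
    exact neg_of_div_neg_left (by linarith [hsq 0]) (hpos 0).le
  have hconc : ConcaveOn ℝ univ l := by
    refine concaveOn_univ_of_deriv2_nonpos hl hl' fun u => ?_
    rw [Function.iterate_succ_apply, Function.iterate_one,
      deriv_deriv_eq_of_deriv_sq_eq (hl u) (hl' u) (.of_forall hsq) (hpos u).ne' (hne u)]
    exact div_nonpos_of_nonpos_of_nonneg hb.le (by positivity)
  obtain ⟨u, hu⟩ := hconc.exists_neg_of_deriv_ne_zero (hl 0) (hne 0)
  exact (hpos u).not_gt hu
end

section
/- Let a ≥ 0 and b ∈ ℝ. There is no C² function λ : [0, ∞) → ℝ with λ(u) > 0 for all u ≥ 0, λ′(0) = 0, λ′(u) ≠ 0 for all u > 0, that satisfies λ′(u)² = −a − b/λ(u) for all u ≥ 0. -/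
/-!
Evaluating the equation at the critical point `0` gives `b = -a λ(0)`, so it reads
`λ′² = a (λ(0)/λ - 1)`. Then `a > 0` (otherwise `λ′ ≡ 0`), hence `λ ≤ λ(0)`, and since `λ′`
cannot change sign on `(0, ∞)` it is negative there. As `λ` decreases, `λ′² = a (λ(0)/λ - 1)`
grows, so `λ′ ≤ λ′(1) < 0` on `[1, ∞)`, and `λ` eventually becomes negative.
-/

open Set

theorem IsPreconnected.pos_or_neg_of_ne_zero {X : Type*} [TopologicalSpace X] {s : Set X}
    {f : X → ℝ} (hs : IsPreconnected s) (hf : ContinuousOn f s) (hne : ∀ x ∈ s, f x ≠ 0) :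
    (∀ x ∈ s, 0 < f x) ∨ ∀ x ∈ s, f x < 0 := by
  by_contra! h
  obtain ⟨⟨x, hx, hfx⟩, y, hy, hfy⟩ := h
  obtain ⟨z, hz, hfz⟩ := hs.intermediate_value hx hy hf ⟨hfx, hfy⟩
  exact hne z hz hfz

theorem neg_of_isMaxOn_Ici_of_ne_zero {l l' : ℝ → ℝ} {t : ℝ} (hl : ContinuousOn l (Ici t))
    (hderiv : ∀ u ∈ Ioi t, HasDerivAt l (l' u) u) (hl' : ContinuousOn l' (Ioi t))
    (hne : ∀ u ∈ Ioi t, l' u ≠ 0) (hmax : IsMaxOn l (Ici t) t) : ∀ u ∈ Ioi t, l' u < 0 := by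
  refine (isPreconnected_Ioi.pos_or_neg_of_ne_zero hl' hne).resolve_left fun hpos => ?_
  have hmono : StrictMonoOn l (Ici t) := strictMonoOn_of_hasDerivWithinAt_pos (convex_Ici t) hl
    (fun u hu => (hderiv u (by simpa using hu)).hasDerivWithinAt)
    (fun u hu => hpos u (by simpa using hu))
  exact (hmono self_mem_Ici (le_of_lt (lt_add_one t)) (lt_add_one t)).not_ge
    (hmax (le_of_lt (lt_add_one t)))

theorem exists_lt_zero_of_hasDerivAt_le_neg {l l' : ℝ → ℝ} {t c : ℝ} (hc : c < 0)
    (hderiv : ∀ u ∈ Ici t, HasDerivAt l (l' u) u) (hle : ∀ u ∈ Ici t, l' u ≤ c) :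
    ∃ u ∈ Ici t, l u < 0 := by
  set u := t + (|l t| + 1) / -c
  have htu : t ≤ u := le_add_of_nonneg_right (div_nonneg (by positivity) (neg_nonneg.2 hc.le))
  have hslope : l u - l t ≤ c * (u - t) :=
    (convex_Ici t).image_sub_le_mul_sub_of_deriv_le
      (fun v hv => (hderiv v hv).continuousAt.continuousWithinAt)
      (fun v hv => (hderiv v (interior_subset hv)).differentiableAt.differentiableWithinAt)
      (fun v hv => (hderiv v (interior_subset hv)).deriv ▸ hle v (interior_subset hv))
      t self_mem_Ici u htu htu
  have hcu : c * (u - t) = -(|l t| + 1) := by simp only [u]; field_simp [hc.ne]; ring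
  refine ⟨u, htu, ?_⟩
  linarith [le_abs_self (l t)]

theorem sq_eq_mul_div_sub_one_of_eq_zero {l l' : ℝ → ℝ} {s : Set ℝ} {a b t : ℝ} (ht : t ∈ s)
    (hl't : l' t = 0) (hne : ∀ u ∈ s, l u ≠ 0) (hode : ∀ u ∈ s, l' u ^ 2 = -a - b / l u) :
    ∀ u ∈ s, l' u ^ 2 = a * (l t / l u - 1) := fun u hu => by
  have hb : b = -a * l t := by
    have h := hode t ht
    rw [hl't] at h
    field_simp [hne t ht] at h
    linarith
  rw [hode u hu, hb]
  field_simp [hne u hu]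
  ring

theorem antitoneOn_of_sq_eq_mul_div_sub_one {l l' : ℝ → ℝ} {s : Set ℝ} {a c : ℝ} (ha : 0 ≤ a)
    (hc : 0 ≤ c) (hl : AntitoneOn l s) (hpos : ∀ u ∈ s, 0 < l u) (hneg : ∀ u ∈ s, l' u < 0)
    (hsq : ∀ u ∈ s, l' u ^ 2 = a * (c / l u - 1)) : AntitoneOn l' s := fun v hv u hu hvu => by
  have hsq_le : (-l' v) ^ 2 ≤ (-l' u) ^ 2 := by
    rw [neg_sq, neg_sq, hsq v hv, hsq u hu]
    gcongr
    exacts [hpos u hu, hl hv hu hvu]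
  linarith [(sq_le_sq₀ (neg_pos.2 (hneg v hv)).le (neg_pos.2 (hneg u hu)).le).1 hsq_le]

/-- No positive `C²` function on `[0,∞)` with `λ′(0) = 0` and no further
critical points can satisfy `(λ′)² = −a − b/λ` with `a ≥ 0` (derivatives on
`[0,∞)` taken one-sidedly at `0`). -/
theorem stmt_13 (a b : ℝ) (ha : 0 ≤ a) :
    ¬ ∃ l : ℝ → ℝ, ContDiffOn ℝ 2 l (Set.Ici (0 : ℝ)) ∧
      (∀ u : ℝ, 0 ≤ u → 0 < l u) ∧
      derivWithin l (Set.Ici (0 : ℝ)) 0 = 0 ∧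
      (∀ u : ℝ, 0 < u → derivWithin l (Set.Ici (0 : ℝ)) u ≠ 0) ∧
      (∀ u : ℝ, 0 ≤ u →
        (derivWithin l (Set.Ici (0 : ℝ)) u) ^ 2 = -a - b / l u) := by
  rintro ⟨l, hl, hpos, hl'0, hne, hode⟩
  set l' := derivWithin l (Ici (0 : ℝ))
  have hderiv : ∀ u ∈ Ioi (0 : ℝ), HasDerivAt l (l' u) u := fun u hu =>
    (hl.differentiableOn two_ne_zero u (mem_Ici.2 hu.le)).hasDerivWithinAt.hasDerivAt
      (Ici_mem_nhds hu)
  have hl'c : ContinuousOn l' (Ici 0) :=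
    (hl.derivWithin (uniqueDiffOn_Ici 0) (m := 1) (by norm_num)).continuousOn
  have hone : (1 : ℝ) ∈ Ioi 0 := mem_Ioi.2 one_pos
  have hsq : ∀ u ∈ Ici (0 : ℝ), l' u ^ 2 = a * (l 0 / l u - 1) :=
    sq_eq_mul_div_sub_one_of_eq_zero self_mem_Ici hl'0 (fun u hu => (hpos u hu).ne') hode
  have ha_pos : 0 < a :=
    ha.lt_of_ne fun h => hne 1 hone (by simpa [← h] using hsq 1 (mem_Ici.2 zero_le_one))
  have hmax : IsMaxOn l (Ici 0) 0 := fun u hu =>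
    (one_le_div (hpos u hu)).1 (by nlinarith [hsq u hu, sq_nonneg (l' u)])
  have hneg := neg_of_isMaxOn_Ici_of_ne_zero hl.continuousOn hderiv
    (hl'c.mono Ioi_subset_Ici_self) hne hmax
  have hanti : AntitoneOn l (Ici 0) := antitoneOn_of_hasDerivWithinAt_nonpos (convex_Ici 0)
    hl.continuousOn (fun u hu => (hderiv u (by simpa using hu)).hasDerivWithinAt)
    (fun u hu => (hneg u (by simpa using hu)).le)
  have hconc : AntitoneOn l' (Ioi 0) := antitoneOn_of_sq_eq_mul_div_sub_one ha
    (hpos 0 le_rfl).le (hanti.mono Ioi_subset_Ici_self) (fun u hu => hpos u hu.le)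
    hneg (fun u hu => hsq u (mem_Ici.2 hu.le))
  obtain ⟨u, hu, hlu⟩ := exists_lt_zero_of_hasDerivAt_le_neg (hneg 1 hone)
    (fun u (hu : 1 ≤ u) => hderiv u (one_pos.trans_le hu))
    (fun u (hu : 1 ≤ u) => hconc hone (mem_Ioi.2 (one_pos.trans_le hu)) hu)
  exact (hpos u (zero_le_one.trans hu)).not_gt hlu
end
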